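/- Let A be an associative algebra and M an A-bimodule, so that M is a representation M_c of the commutator Lie algebra A_c via ρ(a)(m) = a·m − m·a. The skew-symmetrization maps S_n : Hom(A^{⊗n}, M) → Hom(Λⁿ A_c, M_c), S_n(f)(a₁,…,a_n) = Σ_{σ∈S_n} sgn(σ) f(a_{σ(1)},…,a_{σ(n)}), form a morphism of cochain complexes from the Hochschild complex of A with coefficients in M to the Chevalley-Eilenberg complex of A_c with coefficients in M_c, i.e., S_{n+1} ∘ d_Hoch = d_CE ∘ S_n. -/

import Mathlib

section

variable {k A M : Type*} [Field k] [CharZero k] [Ring A] [Algebra k A]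
  [AddCommGroup M] [Module k M]

/-- Skew-symmetrization of an `n`-cochain:
`(Sₙ f)(a₁,…,aₙ) = Σ_{σ} sgn(σ) f(a_{σ(1)},…,a_{σ(n)})`. -/
def skewSym (n : ℕ) (F : (Fin n → A) → M) : (Fin n → A) → M :=
  fun a => ∑ σ : Equiv.Perm (Fin n), (Equiv.Perm.sign σ : ℤ) • F (a ∘ σ)

/-- Multiply the `i`-th and `(i+1)`-th arguments together. -/
def mergeArg {n : ℕ} (a : Fin (n + 1) → A) (i : Fin n) : Fin n → A :=
  fun j =>
    if (j : ℕ) < (i : ℕ) then a j.castSucc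
    else if j = i then a i.castSucc * a i.succ
    else a j.succ

/-- The Hochschild differential of an `n`-cochain, for the bimodule actions
`l : A → M → M` and `r : M → A → M`. -/
def hochschildD (n : ℕ) (l : A →ₗ[k] M →ₗ[k] M) (r : M →ₗ[k] A →ₗ[k] M)
    (F : (Fin n → A) → M) : (Fin (n + 1) → A) → M :=
  fun a =>
    l (a 0) (F (Fin.tail a))
      + ∑ i : Fin n, ((-1 : ℤ) ^ ((i : ℕ) + 1)) • F (mergeArg a i)
      + ((-1 : ℤ) ^ (n + 1)) • r (F (Fin.init a)) (a (Fin.last n))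

/-- Prepend the commutator `[a_i, a_j] = a_i a_j − a_j a_i` and delete the
`i`-th and `j`-th arguments (for `i < j`). -/
def consBracketRemove {n : ℕ} (a : Fin (n + 1) → A) (i j : Fin (n + 1)) :
    Fin n → A :=
  fun m =>
    if hm : (m : ℕ) = 0 then a i * a j - a j * a i
    else if h1 : (m : ℕ) - 1 < (i : ℕ) then a ⟨(m : ℕ) - 1, by omega⟩
    else if h2 : (m : ℕ) < (j : ℕ) then a ⟨(m : ℕ), by omega⟩
    else a ⟨(m : ℕ) + 1, by omega⟩

/-- The Chevalley-Eilenberg differential of an `n`-cochain on the commutator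
Lie algebra `A_c` with coefficients in `M_c`, `ρ(a)(m) = a·m − m·a`. -/
def chevalleyEilenbergD (n : ℕ) (l : A →ₗ[k] M →ₗ[k] M) (r : M →ₗ[k] A →ₗ[k] M)
    (G : (Fin n → A) → M) : (Fin (n + 1) → A) → M :=
  fun a =>
    (∑ i : Fin (n + 1),
      ((-1 : ℤ) ^ (i : ℕ)) •
        (l (a i) (G (a ∘ i.succAbove)) - r (G (a ∘ i.succAbove)) (a i)))
    + ∑ i : Fin (n + 1), ∑ j : Fin (n + 1),
        if (i : ℕ) < (j : ℕ) then
          ((-1 : ℤ) ^ ((i : ℕ) + (j : ℕ))) • G (consBracketRemove a i j)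
        else 0


open Equiv Equiv.Perm Fin

set_option maxHeartbeats 1000000

/-! ### Auxiliary permutations and their properties -/

def permL {n : ℕ} (p : Fin (n+1)) (e : Perm (Fin n)) : Perm (Fin (n+1)) :=
  (p.cycleRange)⁻¹ * Equiv.Perm.decomposeFin.symm (0, e)

theorem permL_zero {n : ℕ} (p : Fin (n+1)) (e : Perm (Fin n)) : permL p e 0 = p := by
  simp [permL, Equiv.Perm.mul_apply, Equiv.Perm.decomposeFin_symm_apply_zero,
    Equiv.Perm.inv_def, Fin.cycleRange_symm_zero]

theorem permL_succ {n : ℕ} (p : Fin (n+1)) (e : Perm (Fin n)) (x : Fin n) :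
    permL p e x.succ = p.succAbove (e x) := by
  simp [permL, Equiv.Perm.mul_apply, Equiv.Perm.decomposeFin_symm_apply_succ,
    Equiv.Perm.inv_def, Fin.cycleRange_symm_succ]

theorem permL_sign {n : ℕ} (p : Fin (n+1)) (e : Perm (Fin n)) :
    ((sign (permL p e) : ℤˣ) : ℤ) = (-1 : ℤ)^(p : ℕ) * ((sign e : ℤˣ) : ℤ) := by
  rw [permL, Equiv.Perm.sign_mul, Equiv.Perm.sign_inv, Fin.sign_cycleRange,
    Equiv.Perm.decomposeFin.symm_sign, if_pos rfl, one_mul]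
  push_cast; ring

theorem permL_bij {n : ℕ} :
    Function.Bijective (fun pe : Fin (n+1) × Perm (Fin n) => permL pe.1 pe.2) := by
  rw [Fintype.bijective_iff_injective_and_card]
  constructor
  · rintro ⟨p, e⟩ ⟨p', e'⟩ h
    simp only at h
    have hp : p = p' := by rw [← permL_zero p e, h, permL_zero]
    subst hp
    have h2 : Equiv.Perm.decomposeFin.symm (0, e) = Equiv.Perm.decomposeFin.symm (0, e') :=
      mul_left_cancel (a := (p.cycleRange)⁻¹) h
    have h3 := Equiv.Perm.decomposeFin.symm.injective h2
    simpa using h3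
  · simp [Fintype.card_perm, Nat.factorial_succ]

def permR {n : ℕ} (p : Fin (n+1)) (e : Perm (Fin n)) : Perm (Fin (n+1)) :=
  permL p e * Fin.cycleRange (Fin.last n)

theorem permR_castSucc {n : ℕ} (p : Fin (n+1)) (e : Perm (Fin n)) (x : Fin n) :
    permR p e (Fin.castSucc x) = p.succAbove (e x) := by
  rw [permR, Equiv.Perm.mul_apply, Fin.cycleRange_of_lt (Fin.castSucc_lt_last x),
    Fin.coeSucc_eq_succ, permL_succ]

theorem permR_last {n : ℕ} (p : Fin (n+1)) (e : Perm (Fin n)) :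
    permR p e (Fin.last n) = p := by
  rw [permR, Equiv.Perm.mul_apply, Fin.cycleRange_self, permL_zero]

theorem permR_sign {n : ℕ} (p : Fin (n+1)) (e : Perm (Fin n)) :
    ((sign (permR p e) : ℤˣ) : ℤ) = (-1:ℤ)^(n) * ((sign (permL p e) : ℤˣ) : ℤ) := by
  rw [permR, Equiv.Perm.sign_mul, Fin.sign_cycleRange]
  push_cast; ring

theorem permR_bij {n : ℕ} :
    Function.Bijective (fun pe : Fin (n+1) × Perm (Fin n) => permR pe.1 pe.2) :=
  (Equiv.mulRight (Fin.cycleRange (Fin.last n))).bijective.comp permL_bij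

def permM {n : ℕ} (p : Fin (n+2)) (q : Fin (n+1)) (τ : Perm (Fin (n+1))) :
    Perm (Fin (n+2)) :=
  permL p (q.cycleRange)⁻¹ * Equiv.Perm.decomposeFin.symm (0, τ)
    * Fin.cycleRange (Fin.castSucc (τ⁻¹ 0))

theorem permM_fst {n : ℕ} (p : Fin (n+2)) (q : Fin (n+1)) (τ : Perm (Fin (n+1))) :
    permM p q τ (Fin.castSucc (τ⁻¹ 0)) = p := by
  rw [permM, Equiv.Perm.mul_apply, Equiv.Perm.mul_apply, Fin.cycleRange_self,
    Equiv.Perm.decomposeFin_symm_apply_zero, permL_zero]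

theorem perm_apply_inv_self' {α : Type*} (f : Perm α) (x : α) : f (f⁻¹ x) = x :=
  f.apply_symm_apply x

theorem perm_inv_apply_self' {α : Type*} (f : Perm α) (x : α) : f⁻¹ (f x) = x :=
  f.symm_apply_apply x

theorem permM_snd {n : ℕ} (p : Fin (n+2)) (q : Fin (n+1)) (τ : Perm (Fin (n+1))) :
    permM p q τ (Fin.succ (τ⁻¹ 0)) = p.succAbove q := by
  rw [permM, Equiv.Perm.mul_apply, Equiv.Perm.mul_apply,
    Fin.cycleRange_of_gt Fin.castSucc_lt_succ,
    Equiv.Perm.decomposeFin_symm_apply_succ, perm_apply_inv_self',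
    Equiv.swap_self, Equiv.refl_apply, permL_succ]
  congr 1
  rw [Equiv.Perm.inv_def, Fin.cycleRange_symm_zero]

theorem permM_lt {n : ℕ} (p : Fin (n+2)) (q : Fin (n+1)) (τ : Perm (Fin (n+1)))
    (m : Fin (n+1)) (h : m < τ⁻¹ 0) :
    permM p q τ (Fin.castSucc m) = p.succAbove ((q.cycleRange)⁻¹ (τ m)) := by
  rw [permM, Equiv.Perm.mul_apply, Equiv.Perm.mul_apply,
    Fin.cycleRange_of_lt (by rwa [Fin.castSucc_lt_castSucc_iff]),
    Fin.coeSucc_eq_succ, Equiv.Perm.decomposeFin_symm_apply_succ,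
    Equiv.swap_self, Equiv.refl_apply, permL_succ]

theorem permM_gt {n : ℕ} (p : Fin (n+2)) (q : Fin (n+1)) (τ : Perm (Fin (n+1)))
    (m : Fin (n+1)) (h : τ⁻¹ 0 < m) :
    permM p q τ (Fin.succ m) = p.succAbove ((q.cycleRange)⁻¹ (τ m)) := by
  rw [permM, Equiv.Perm.mul_apply, Equiv.Perm.mul_apply,
    Fin.cycleRange_of_gt (Fin.castSucc_lt_succ_iff.mpr h.le),
    Equiv.Perm.decomposeFin_symm_apply_succ,
    Equiv.swap_self, Equiv.refl_apply, permL_succ]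

theorem permM_sign {n : ℕ} (p : Fin (n+2)) (q : Fin (n+1)) (τ : Perm (Fin (n+1))) :
    ((sign (permM p q τ) : ℤˣ) : ℤ)
      = (-1:ℤ)^((p:ℕ) + (q:ℕ) + ((τ⁻¹ 0 : Fin (n+1)) : ℕ)) * ((sign τ : ℤˣ) : ℤ) := by
  rw [permM, Equiv.Perm.sign_mul, Equiv.Perm.sign_mul, Fin.sign_cycleRange,
    Equiv.Perm.decomposeFin.symm_sign, if_pos rfl, one_mul]
  push_cast [permL_sign, Equiv.Perm.sign_inv, Fin.sign_cycleRange, Fin.coe_castSucc]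
  ring

theorem permM_bij {n : ℕ} :
    Function.Bijective (fun t : Fin (n+2) × Fin (n+1) × Perm (Fin (n+1)) =>
      ((t.2.2⁻¹ 0, permM t.1 t.2.1 t.2.2) : Fin (n+1) × Perm (Fin (n+2)))) := by
  rw [Fintype.bijective_iff_injective_and_card]
  constructor
  · rintro ⟨p, q, τ⟩ ⟨p', q', τ'⟩ h
    simp only [Prod.mk.injEq] at h
    obtain ⟨h1, h2⟩ := h
    have hp : p = p' := by
      rw [← permM_fst p q τ, h2, h1, permM_fst]
    subst hp
    have hq : q = q' := by
      have h3 := permM_snd p q τ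
      rw [h2, h1, permM_snd] at h3
      exact Fin.succAbove_right_injective h3.symm
    subst hq
    have hτ : τ = τ' := by
      rw [permM, permM, h1] at h2
      have h3 := mul_right_cancel h2
      have h4 := mul_left_cancel h3
      have h5 := Equiv.Perm.decomposeFin.symm.injective h4
      simpa using h5
    subst hτ
    rfl
  · simp [Fintype.card_perm, Nat.factorial_succ]
    ring

/-! ### The left and right terms -/

theorem phi_skew (n : ℕ) (φ : M →ₗ[k] M) (f : MultilinearMap k (fun _ : Fin n => A) M)
    (b : Fin n → A) :
    ∑ e : Perm (Fin n), ((sign e : ℤˣ) : ℤ) • φ (f (b ∘ e))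
      = φ (skewSym n (fun x => f x) b) := by
  rw [skewSym, map_sum]
  exact Finset.sum_congr rfl fun e _ => (map_zsmul φ _ _).symm

theorem Lterm (n : ℕ) (l : A →ₗ[k] M →ₗ[k] M)
    (f : MultilinearMap k (fun _ : Fin n => A) M) (a : Fin (n+1) → A) :
    ∑ σ : Perm (Fin (n+1)), ((sign σ : ℤˣ) : ℤ) • l (a (σ 0)) (f (Fin.tail (a ∘ σ)))
      = ∑ p : Fin (n+1),
          ((-1 : ℤ)^(p : ℕ)) • l (a p) (skewSym n (fun x => f x) (a ∘ p.succAbove)) := by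
  rw [← Fintype.sum_bijective _ permL_bij _
      (fun σ => ((sign σ : ℤˣ) : ℤ) • l (a (σ 0)) (f (Fin.tail (a ∘ σ)))) (fun pe => rfl)]
  rw [Fintype.sum_prod_type]
  apply Finset.sum_congr rfl
  intro p _
  rw [← phi_skew n (l (a p)) f (a ∘ p.succAbove), Finset.smul_sum]
  apply Finset.sum_congr rfl
  intro e _
  have h1 : Fin.tail (a ∘ (permL p e)) = (a ∘ p.succAbove) ∘ e := by
    funext x
    simp [Fin.tail, permL_succ]
  show ((sign (permL p e) : ℤˣ) : ℤ) • l (a (permL p e 0)) (f (Fin.tail (a ∘ permL p e))) = _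
  rw [permL_zero, h1, permL_sign, mul_smul]

theorem Rterm (n : ℕ) (r : M →ₗ[k] A →ₗ[k] M)
    (f : MultilinearMap k (fun _ : Fin n => A) M) (a : Fin (n+1) → A) :
    ∑ σ : Perm (Fin (n+1)), ((sign σ : ℤˣ) : ℤ) •
        (((-1:ℤ)^(n+1)) • r (f (Fin.init (a ∘ σ))) (a (σ (Fin.last n))))
      = ∑ p : Fin (n+1),
          (-((-1 : ℤ)^(p : ℕ))) •
            r (skewSym n (fun x => f x) (a ∘ p.succAbove)) (a p) := by
  rw [← Fintype.sum_bijective _ permR_bij _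
      (fun σ => ((sign σ : ℤˣ) : ℤ) •
        (((-1:ℤ)^(n+1)) • r (f (Fin.init (a ∘ σ))) (a (σ (Fin.last n))))) (fun pe => rfl)]
  rw [Fintype.sum_prod_type]
  apply Finset.sum_congr rfl
  intro p _
  have hflip : ∀ m : M, r m (a p) = (r.flip (a p)) m := fun m => rfl
  rw [show (-((-1 : ℤ)^(p : ℕ))) • r (skewSym n (fun x => f x) (a ∘ p.succAbove)) (a p)
      = (-((-1 : ℤ)^(p : ℕ))) • (r.flip (a p)) (skewSym n (fun x => f x) (a ∘ p.succAbove))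
      from rfl]
  rw [← phi_skew n (r.flip (a p)) f (a ∘ p.succAbove), Finset.smul_sum]
  apply Finset.sum_congr rfl
  intro e _
  have h1 : Fin.init (a ∘ (permR p e)) = (a ∘ p.succAbove) ∘ e := by
    funext x
    simp only [Fin.init, Function.comp_apply, permR_castSucc]
  show ((sign (permR p e) : ℤˣ) : ℤ) •
      (((-1:ℤ)^(n+1)) • r (f (Fin.init (a ∘ permR p e))) (a (permR p e (Fin.last n)))) = _
  rw [permR_last, h1, permR_sign, permL_sign, smul_smul, smul_smul, hflip]
  congr 1
  have hnn : (-1:ℤ)^n * (-1:ℤ)^(n+1) = -1 := by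
    rw [← pow_add, show n+(n+1) = 2*n+1 by omega, pow_succ, pow_mul, neg_one_sq,
      one_pow, one_mul]
  calc ((-1:ℤ)^n * ((-1:ℤ)^(p:ℕ) * ((sign e : ℤˣ) : ℤ))) * (-1:ℤ)^(n+1)
      = ((-1:ℤ)^n * (-1:ℤ)^(n+1)) * ((-1:ℤ)^(p:ℕ) * ((sign e : ℤˣ) : ℤ)) := by ring
    _ = -((-1:ℤ)^(p:ℕ)) * ((sign e : ℤˣ) : ℤ) := by rw [hnn]; ring

/-! ### The middle term -/

def cBR2 {n : ℕ} (a : Fin (n+2) → A) (p : Fin (n+2)) (q : Fin (n+1)) :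
    Fin (n+1) → A :=
  fun m => if m = 0 then a p * a (p.succAbove q)
    else a (p.succAbove ((q.cycleRange)⁻¹ m))

theorem mergeKey {n : ℕ} (a : Fin (n+2) → A) (p : Fin (n+2)) (q : Fin (n+1))
    (τ : Perm (Fin (n+1))) :
    mergeArg (a ∘ (permM p q τ)) (τ⁻¹ 0) = cBR2 a p q ∘ τ := by
  funext m
  rcases lt_trichotomy m (τ⁻¹ 0) with h | h | h
  · have hm : τ m ≠ 0 := fun hc => absurd (by rw [← hc, perm_inv_apply_self']) h.ne
    rw [mergeArg]
    simp only [Function.comp_apply]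
    rw [if_pos (Fin.lt_def.mp h), permM_lt p q τ m h, cBR2, if_neg hm]
  · subst h
    rw [mergeArg]
    simp only [Function.comp_apply]
    rw [if_neg (lt_irrefl _)]
    rw [if_true, permM_fst, permM_snd, cBR2,
      if_pos (show τ (τ⁻¹ 0) = 0 by rw [perm_apply_inv_self'])]
  · have hm : τ m ≠ 0 := fun hc => absurd (by rw [← hc, perm_inv_apply_self']) h.ne'
    rw [mergeArg]
    simp only [Function.comp_apply]
    rw [if_neg (not_lt.mpr (Fin.le_def.mp h.le)), if_neg h.ne', permM_gt p q τ m h, cBR2,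
      if_neg hm]

theorem Mterm {N : ℕ} (f : MultilinearMap k (fun _ : Fin (N+1) => A) M)
    (a : Fin (N+2) → A) :
    ∑ σ : Perm (Fin (N+2)), ((sign σ : ℤˣ) : ℤ) •
        (∑ i : Fin (N+1), ((-1 : ℤ) ^ ((i : ℕ) + 1)) • f (mergeArg (a ∘ σ) i))
      = ∑ p : Fin (N+2), ∑ q : Fin (N+1),
          (-(-1:ℤ)^((p:ℕ)+(q:ℕ))) • skewSym (N+1) (fun x => f x) (cBR2 a p q) := by
  have lhs1 : ∀ σ : Perm (Fin (N+2)), ((sign σ : ℤˣ) : ℤ) •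
      (∑ i : Fin (N+1), ((-1 : ℤ) ^ ((i : ℕ) + 1)) • f (mergeArg (a ∘ σ) i))
      = ∑ i : Fin (N+1), (((sign σ : ℤˣ) : ℤ) * (-1:ℤ)^((i:ℕ)+1)) • f (mergeArg (a∘σ) i) := by
    intro σ
    rw [Finset.smul_sum]
    exact Finset.sum_congr rfl fun i _ => smul_smul _ _ _
  rw [Finset.sum_congr rfl (fun σ _ => lhs1 σ), Finset.sum_comm]
  have hprod : (∑ y : Fin (N+1) × Perm (Fin (N+2)),
        (((sign y.2 : ℤˣ) : ℤ) * (-1:ℤ)^((y.1:ℕ)+1)) • f (mergeArg (a ∘ y.2) y.1))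
      = ∑ i : Fin (N+1), ∑ σ : Perm (Fin (N+2)),
        (((sign σ : ℤˣ) : ℤ) * (-1:ℤ)^((i:ℕ)+1)) • f (mergeArg (a∘σ) i) :=
    Fintype.sum_prod_type _
  rw [← hprod]
  have key : ∑ t : Fin (N+2) × Fin (N+1) × Perm (Fin (N+1)),
      (-(-1:ℤ)^((t.1:ℕ)+(t.2.1:ℕ))) • (((sign t.2.2 : ℤˣ) : ℤ) • f (cBR2 a t.1 t.2.1 ∘ t.2.2))
      = ∑ y : Fin (N+1) × Perm (Fin (N+2)),
        (((sign y.2 : ℤˣ) : ℤ) * (-1:ℤ)^((y.1:ℕ)+1)) • f (mergeArg (a ∘ y.2) y.1) := by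
    apply Fintype.sum_bijective _ permM_bij _ _
    rintro ⟨p, q, τ⟩
    show (-(-1:ℤ)^((p:ℕ)+(q:ℕ))) • (((sign τ : ℤˣ) : ℤ) • f (cBR2 a p q ∘ τ))
      = (((sign (permM p q τ) : ℤˣ) : ℤ) * (-1:ℤ)^(((τ⁻¹ 0 : Fin (N+1)):ℕ)+1)) •
          f (mergeArg (a ∘ (permM p q τ)) (τ⁻¹ 0))
    rw [mergeKey, permM_sign, smul_smul]
    congr 1
    have h2 : (-1:ℤ)^((p:ℕ)+(q:ℕ)+((τ⁻¹ 0 : Fin (N+1)):ℕ))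
        * (-1:ℤ)^(((τ⁻¹ 0 : Fin (N+1)):ℕ)+1) = -(-1:ℤ)^((p:ℕ)+(q:ℕ)) := by
      rw [← pow_add, show ((p:ℕ)+(q:ℕ)+((τ⁻¹ 0 : Fin (N+1)):ℕ))+(((τ⁻¹ 0 : Fin (N+1)):ℕ)+1)
          = 2*((τ⁻¹ 0 : Fin (N+1)):ℕ) + (((p:ℕ)+(q:ℕ))+1) by omega,
        pow_add, pow_mul, neg_one_sq, one_pow, one_mul, pow_succ, mul_neg_one]
    rw [mul_right_comm, h2]
  rw [← key]
  have hprod2 : (∑ t : Fin (N+2) × Fin (N+1) × Perm (Fin (N+1)),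
      (-(-1:ℤ)^((t.1:ℕ)+(t.2.1:ℕ))) • (((sign t.2.2 : ℤˣ) : ℤ) • f (cBR2 a t.1 t.2.1 ∘ t.2.2)))
      = ∑ p : Fin (N+2), ∑ u : Fin (N+1) × Perm (Fin (N+1)),
        (-(-1:ℤ)^((p:ℕ)+(u.1:ℕ))) • (((sign u.2 : ℤˣ) : ℤ) • f (cBR2 a p u.1 ∘ u.2)) :=
    Fintype.sum_prod_type _
  rw [hprod2]
  apply Finset.sum_congr rfl
  intro p _
  have hprod3 : (∑ u : Fin (N+1) × Perm (Fin (N+1)),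
      (-(-1:ℤ)^((p:ℕ)+(u.1:ℕ))) • (((sign u.2 : ℤˣ) : ℤ) • f (cBR2 a p u.1 ∘ u.2)))
      = ∑ q : Fin (N+1), ∑ τ : Perm (Fin (N+1)),
        (-(-1:ℤ)^((p:ℕ)+(q:ℕ))) • (((sign τ : ℤˣ) : ℤ) • f (cBR2 a p q ∘ τ)) :=
    Fintype.sum_prod_type _
  rw [hprod3]
  apply Finset.sum_congr rfl
  intro q _
  rw [← Finset.smul_sum]
  rfl

/-! ### The Chevalley-Eilenberg side -/

theorem cycrange_inv_eval {N : ℕ} (q x : Fin (N+1)) (hx : (x:ℕ) ≠ 0) :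
    (q.cycleRange)⁻¹ x
      = if h : (x:ℕ) ≤ (q:ℕ) then ⟨(x:ℕ)-1, by omega⟩ else x := by
  rw [Equiv.Perm.inv_def, Equiv.symm_apply_eq]
  split_ifs with h
  · have hlt : (⟨(x:ℕ)-1, by omega⟩ : Fin (N+1)) < q := by
      rw [Fin.lt_def]; simp; omega
    rw [Fin.cycleRange_of_lt hlt]
    apply Fin.ext
    rw [Fin.val_add_one_of_lt (by rw [Fin.lt_def]; simp [Fin.val_last]; omega)]
    simp; omega
  · rw [Fin.cycleRange_of_gt (by rw [Fin.lt_def]; omega)]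

theorem succAbove_coe {N : ℕ} (p : Fin (N+1)) (y : Fin N) :
    ((p.succAbove y : Fin (N+1)) : ℕ) = if (y:ℕ) < (p:ℕ) then (y:ℕ) else (y:ℕ)+1 := by
  split_ifs with h
  · rw [Fin.succAbove_of_castSucc_lt p y (by rw [Fin.lt_def]; simpa using h)]
    simp
  · rw [Fin.succAbove_of_le_castSucc p y (by rw [Fin.le_def]; simpa using not_lt.mp h)]
    simp

theorem tail1 {N : ℕ} (a : Fin (N+2) → A) (i j : Fin (N+2)) (hij : (i:ℕ) < (j:ℕ))
    (x : Fin (N+1)) (hx : (x:ℕ) ≠ 0) :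
    consBracketRemove a i j x = cBR2 a i ⟨(j:ℕ)-1, by omega⟩ x := by
  have hxne : x ≠ 0 := fun hc => hx (by rw [hc]; rfl)
  rw [consBracketRemove, cBR2, dif_neg hx, if_neg hxne, cycrange_inv_eval _ _ hx]
  have hj := j.isLt
  have hi := i.isLt
  split_ifs <;>
    (refine congrArg a (Fin.ext ?_)) <;>
    rw [succAbove_coe] <;> split_ifs <;> simp_all <;> (have hx0 : (x:ℕ) ≠ 0 := fun h0 => hxne (Fin.ext (by simpa using h0)); omega)

theorem tail2 {N : ℕ} (a : Fin (N+2) → A) (i j : Fin (N+2)) (hij : (i:ℕ) < (j:ℕ))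
    (x : Fin (N+1)) (hx : (x:ℕ) ≠ 0) :
    consBracketRemove a i j x = cBR2 a j ⟨(i:ℕ), by omega⟩ x := by
  have hxne : x ≠ 0 := fun hc => hx (by rw [hc]; rfl)
  rw [consBracketRemove, cBR2, dif_neg hx, if_neg hxne, cycrange_inv_eval _ _ hx]
  have hj := j.isLt
  have hi := i.isLt
  split_ifs <;>
    (refine congrArg a (Fin.ext ?_)) <;>
    rw [succAbove_coe] <;> split_ifs <;> simp_all <;> omega

theorem head1 {N : ℕ} (i j : Fin (N+2)) (hij : (i:ℕ) < (j:ℕ)) :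
    i.succAbove (⟨(j:ℕ)-1, by omega⟩ : Fin (N+1)) = j := by
  have hj := j.isLt
  apply Fin.ext
  rw [succAbove_coe]
  split_ifs <;> simp_all <;> omega

theorem head2 {N : ℕ} (i j : Fin (N+2)) (hij : (i:ℕ) < (j:ℕ)) :
    j.succAbove (⟨(i:ℕ), by omega⟩ : Fin (N+1)) = i := by
  apply Fin.ext
  rw [succAbove_coe]
  split_ifs <;> simp_all

theorem split_skew {N : ℕ} (f : MultilinearMap k (fun _ : Fin (N+1) => A) M)
    (a : Fin (N+2) → A) (i j : Fin (N+2)) (hij : (i:ℕ) < (j:ℕ)) :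
    skewSym (N+1) (fun x => f x) (consBracketRemove a i j)
      = skewSym (N+1) (fun x => f x) (cBR2 a i ⟨(j:ℕ)-1, by omega⟩)
        - skewSym (N+1) (fun x => f x) (cBR2 a j ⟨(i:ℕ), by omega⟩) := by
  rw [skewSym, skewSym, skewSym, ← Finset.sum_sub_distrib]
  apply Finset.sum_congr rfl
  intro τ _
  rw [← smul_sub]
  congr 1
  set c : Fin (N+1) := τ⁻¹ 0 with hc
  have htc : τ c = 0 := perm_apply_inv_self' τ 0
  set base : Fin (N+1) → A := cBR2 a i ⟨(j:ℕ)-1, by omega⟩ ∘ τ with hbase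
  have hbc : base c = a i * a j := by
    rw [hbase, Function.comp_apply, htc, cBR2, if_pos rfl, head1 i j hij]
  have key1 : consBracketRemove a i j ∘ τ
      = Function.update base c (a i * a j - a j * a i) := by
    funext x
    by_cases hx : x = c
    · subst hx
      rw [Function.update_self, Function.comp_apply, htc, consBracketRemove, dif_pos (Fin.val_zero (N+1))]
    · rw [Function.update_of_ne hx, Function.comp_apply, hbase, Function.comp_apply]
      have hne : (τ x : ℕ) ≠ 0 := by
        intro hc0
        have h0 : τ x = 0 := Fin.ext (by simpa using hc0)
        exact hx (by rw [hc, ← h0, perm_inv_apply_self'])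
      exact tail1 a i j hij (τ x) hne
  have key2 : cBR2 a j ⟨(i:ℕ), by omega⟩ ∘ τ = Function.update base c (a j * a i) := by
    funext x
    by_cases hx : x = c
    · subst hx
      rw [Function.update_self, Function.comp_apply, htc, cBR2, if_pos rfl, head2 i j hij]
    · rw [Function.update_of_ne hx, Function.comp_apply, hbase, Function.comp_apply]
      have hne : (τ x : ℕ) ≠ 0 := by
        intro hc0
        have h0 : τ x = 0 := Fin.ext (by simpa using hc0)
        exact hx (by rw [hc, ← h0, perm_inv_apply_self'])
      rw [← tail1 a i j hij (τ x) hne, ← tail2 a i j hij (τ x) hne]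
  have key3 : f base = f (Function.update base c (a i * a j)) := by
    rw [← hbc, Function.update_eq_self]
  rw [key1, key2, f.map_update_sub, ← key3]

def Tterm {N : ℕ} (f : MultilinearMap k (fun _ : Fin (N+1) => A) M)
    (a : Fin (N+2) → A) (p j : Fin (N+2)) : M :=
  if h : (p:ℕ) < (j:ℕ) then
    ((-1:ℤ)^((p:ℕ)+(j:ℕ))) • skewSym (N+1) (fun x => f x) (cBR2 a p ⟨(j:ℕ)-1, by omega⟩)
  else if h' : (j:ℕ) < (p:ℕ) then
    (-(-1:ℤ)^((p:ℕ)+(j:ℕ))) • skewSym (N+1) (fun x => f x) (cBR2 a p ⟨(j:ℕ), by omega⟩)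
  else 0

theorem claim1 {N : ℕ} (f : MultilinearMap k (fun _ : Fin (N+1) => A) M)
    (a : Fin (N+2) → A) (p : Fin (N+2)) :
    ∑ q : Fin (N+1), (-(-1:ℤ)^((p:ℕ)+(q:ℕ))) • skewSym (N+1) (fun x => f x) (cBR2 a p q)
      = ∑ j : Fin (N+2), Tterm f a p j := by
  rw [Fin.sum_univ_succAbove (fun j => Tterm f a p j) p]
  have hTpp : Tterm f a p p = 0 := by
    rw [Tterm, dif_neg (lt_irrefl _), dif_neg (lt_irrefl _)]
  rw [hTpp, zero_add]
  apply Finset.sum_congr rfl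
  intro q _
  by_cases hq : (q:ℕ) < (p:ℕ)
  · have h1 : ((p.succAbove q : Fin (N+2)) : ℕ) = (q:ℕ) := by
      rw [succAbove_coe, if_pos hq]
    rw [Tterm, dif_neg (by omega), dif_pos (by omega)]
    congr 2
    · rw [h1]
    · exact congrArg (cBR2 a p) (Fin.ext (by simp [h1]))
  · have h1 : ((p.succAbove q : Fin (N+2)) : ℕ) = (q:ℕ)+1 := by
      rw [succAbove_coe, if_neg hq]
    rw [Tterm, dif_pos (by omega)]
    have hcoef : ((-1:ℤ)^((p:ℕ)+((p.succAbove q : Fin (N+2)):ℕ)))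
        = -(-1:ℤ)^((p:ℕ)+(q:ℕ)) := by
      rw [h1, show (p:ℕ)+((q:ℕ)+1) = ((p:ℕ)+(q:ℕ))+1 from rfl, pow_succ]
      ring
    rw [hcoef]
    congr 2
    exact congrArg (cBR2 a p) (Fin.ext (by simp [h1]))

theorem claim2 {N : ℕ} (f : MultilinearMap k (fun _ : Fin (N+1) => A) M)
    (a : Fin (N+2) → A) :
    ∑ i : Fin (N+2), ∑ j : Fin (N+2),
        (if (i : ℕ) < (j : ℕ) then
          ((-1 : ℤ) ^ ((i : ℕ) + (j : ℕ))) •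
            skewSym (N+1) (fun x => f x) (consBracketRemove a i j)
        else 0)
      = ∑ p : Fin (N+2), ∑ j : Fin (N+2), Tterm f a p j := by
  have hdecomp : ∀ p j : Fin (N+2), Tterm f a p j
      = (if (p:ℕ) < (j:ℕ) then Tterm f a p j else 0)
        + (if (j:ℕ) < (p:ℕ) then Tterm f a p j else 0) := by
    intro p j
    rcases lt_trichotomy ((p:ℕ)) ((j:ℕ)) with h | h | h
    · rw [if_pos h, if_neg (by omega), add_zero]
    · rw [if_neg (by omega), if_neg (by omega), zero_add, Tterm,
        dif_neg (by omega), dif_neg (by omega)]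
    · rw [if_neg (by omega), if_pos h, zero_add]
  have step1 : ∑ i : Fin (N+2), ∑ j : Fin (N+2),
        (if (i : ℕ) < (j : ℕ) then
          ((-1 : ℤ) ^ ((i : ℕ) + (j : ℕ))) •
            skewSym (N+1) (fun x => f x) (consBracketRemove a i j)
        else 0)
      = ∑ i : Fin (N+2), ∑ j : Fin (N+2),
          ((if (i:ℕ) < (j:ℕ) then Tterm f a i j else 0)
            + (if (i:ℕ) < (j:ℕ) then Tterm f a j i else 0)) := by
    apply Finset.sum_congr rfl; intro i _
    apply Finset.sum_congr rfl; intro j _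
    by_cases hij : (i:ℕ) < (j:ℕ)
    · rw [if_pos hij, if_pos hij, if_pos hij]
      simp only [Tterm]
      rw [dif_pos hij, dif_neg (by omega), dif_pos hij,
        split_skew f a i j hij, smul_sub,
        show (j:ℕ)+(i:ℕ) = (i:ℕ)+(j:ℕ) from Nat.add_comm _ _,
        sub_eq_add_neg, neg_smul]
    · rw [if_neg hij, if_neg hij, if_neg hij, add_zero]
  rw [step1]
  have step2 : ∀ i : Fin (N+2),
      (∑ j : Fin (N+2), ((if (i:ℕ) < (j:ℕ) then Tterm f a i j else 0)
        + (if (i:ℕ) < (j:ℕ) then Tterm f a j i else 0)))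
      = (∑ j : Fin (N+2), (if (i:ℕ) < (j:ℕ) then Tterm f a i j else 0))
        + (∑ j : Fin (N+2), (if (i:ℕ) < (j:ℕ) then Tterm f a j i else 0)) :=
    fun i => Finset.sum_add_distrib
  rw [Finset.sum_congr rfl (fun i _ => step2 i), Finset.sum_add_distrib,
    Finset.sum_comm]
  conv_rhs => rw [Finset.sum_comm]
  rw [← Finset.sum_add_distrib]
  apply Finset.sum_congr rfl; intro p _
  rw [← Finset.sum_add_distrib]
  apply Finset.sum_congr rfl; intro q _
  exact (hdecomp q p).symm


theorem Ylink (n : ℕ) (f : MultilinearMap k (fun _ : Fin n => A) M)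
    (a : Fin (n+1) → A) :
    ∑ σ : Perm (Fin (n+1)), ((sign σ : ℤˣ) : ℤ) •
        (∑ i : Fin n, ((-1 : ℤ) ^ ((i : ℕ) + 1)) • f (mergeArg (a ∘ σ) i))
      = ∑ i : Fin (n+1), ∑ j : Fin (n+1),
          (if (i : ℕ) < (j : ℕ) then
            ((-1 : ℤ) ^ ((i : ℕ) + (j : ℕ))) •
              skewSym n (fun x => f x) (consBracketRemove a i j)
          else 0) := by
  cases n with
  | zero =>
    have h1 : ∀ i j : Fin 1, ¬ ((i:ℕ) < (j:ℕ)) := by decide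
    simp [h1]
  | succ N =>
    rw [Mterm f a, Finset.sum_congr rfl (fun p _ => claim1 f a p)]
    exact (claim2 f a).symm

/-- the skew-symmetrization maps `Sₙ` form a morphism of cochain
complexes, from the Hochschild complex of `A` with coefficients in the
bimodule `M` to the Chevalley-Eilenberg complex of the commutator Lie algebra
`A_c` with coefficients in `M_c`:  `S_{n+1} ∘ d_Hoch = d_CE ∘ Sₙ`. -/
theorem skewSym_chain_map
    (l : A →ₗ[k] M →ₗ[k] M) (r : M →ₗ[k] A →ₗ[k] M)
    (hl : ∀ (a b : A) (m : M), l (a * b) m = l a (l b m))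
    (hm : ∀ (a : A) (m : M) (b : A), r (l a m) b = l a (r m b))
    (hr : ∀ (m : M) (a b : A), r m (a * b) = r (r m a) b)
    (n : ℕ) (f : MultilinearMap k (fun _ : Fin n => A) M) :
    ∀ a : Fin (n + 1) → A,
      skewSym (n + 1) (hochschildD n l r (fun x => f x)) a
      = chevalleyEilenbergD n l r (skewSym n (fun x => f x)) a := by
  intro a
  have hL := Lterm n l f a
  have hR := Rterm n r f a
  have hY := Ylink n f a
  have step1 : skewSym (n+1) (hochschildD n l r (fun x => f x)) a
      = (∑ σ : Perm (Fin (n+1)), ((sign σ : ℤˣ) : ℤ) • l (a (σ 0)) (f (Fin.tail (a ∘ σ))))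
        + (∑ σ : Perm (Fin (n+1)), ((sign σ : ℤˣ) : ℤ) •
            (∑ i : Fin n, ((-1 : ℤ) ^ ((i : ℕ) + 1)) • f (mergeArg (a ∘ σ) i)))
        + (∑ σ : Perm (Fin (n+1)), ((sign σ : ℤˣ) : ℤ) •
            (((-1:ℤ)^(n+1)) • r (f (Fin.init (a ∘ σ))) (a (σ (Fin.last n))))) := by
    rw [← Finset.sum_add_distrib, ← Finset.sum_add_distrib]
    apply Finset.sum_congr rfl
    intro σ _
    show ((sign σ : ℤˣ) : ℤ) • (hochschildD n l r (fun x => f x) (a ∘ σ)) = _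
    simp only [hochschildD, Function.comp_apply, smul_add]
  have hCE : chevalleyEilenbergD n l r (skewSym n (fun x => f x)) a
      = (∑ i : Fin (n + 1),
          ((-1 : ℤ) ^ (i : ℕ)) •
            (l (a i) (skewSym n (fun x => f x) (a ∘ i.succAbove))
              - r (skewSym n (fun x => f x) (a ∘ i.succAbove)) (a i)))
        + ∑ i : Fin (n + 1), ∑ j : Fin (n + 1),
            (if (i : ℕ) < (j : ℕ) then
              ((-1 : ℤ) ^ ((i : ℕ) + (j : ℕ))) •
                skewSym n (fun x => f x) (consBracketRemove a i j)
            else 0) := rfl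
  have hsplit2 : (∑ i : Fin (n + 1),
        ((-1 : ℤ) ^ (i : ℕ)) •
          (l (a i) (skewSym n (fun x => f x) (a ∘ i.succAbove))
            - r (skewSym n (fun x => f x) (a ∘ i.succAbove)) (a i)))
      = (∑ p : Fin (n+1),
          ((-1 : ℤ)^(p : ℕ)) • l (a p) (skewSym n (fun x => f x) (a ∘ p.succAbove)))
        + (∑ p : Fin (n+1),
          (-((-1 : ℤ)^(p : ℕ))) •
            r (skewSym n (fun x => f x) (a ∘ p.succAbove)) (a p)) := by
    rw [← Finset.sum_add_distrib]
    apply Finset.sum_congr rfl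
    intro p _
    rw [smul_sub, sub_eq_add_neg, neg_smul]
  rw [step1, hL, hY, hR, hCE, hsplit2]
  abel


end
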